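/- If the supply graph is a cycle and there are at most two OD-pairs (|L| ≤ 2, H simple), then the pair (G, H) has the uniqueness property. -/

import Mathlib

open scoped Classical
open MeasureTheory

/-- The positive (counterclockwise) route of the OD-pair `(o, d)` on the cycle with
vertex set `ZMod n` contains the positive arc at edge `v` (the arc from `v` to `v + 1`)
iff `posRoute n o d v` holds. -/
def posRoute (n : ℕ) (o d v : ZMod n) : Prop := (v - o).val < (d - o).val

/-- The negative (clockwise) route of `(o, d)` contains the negative arc at edge `v`
(the arc from `v + 1` to `v`) iff `negRoute n o d v` holds. -/
def negRoute (n : ℕ) (o d v : ZMod n) : Prop := (v - d).val < (o - d).val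

/-- An arc of the directed version of the cycle is a pair `(v, b)`: for `b = true` the
positive arc `v → v + 1`, for `b = false` the negative arc `v + 1 → v`.
`inRoute n o d b a` says that arc `a` lies on the route of direction `b` of the
OD-pair `(o, d)`. -/
def inRoute (n : ℕ) (o d : ZMod n) (b : Bool) (a : ZMod n × Bool) : Prop :=
  a.2 = b ∧ (if b then posRoute n o d a.1 else negRoute n o d a.1)

/-- Flow induced on arc `a` by the strategy profile `σ` (`σ i = true` means that
user `i` chooses their positive route, `σ i = false` their negative route). -/
noncomputable def flow {I : Type} [MeasurableSpace I] (μ : Measure I) (n : ℕ)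
    (od : I → ZMod n × ZMod n) (σ : I → Bool) (a : ZMod n × Bool) : ℝ :=
  (μ {i | inRoute n (od i).1 (od i).2 (σ i) a}).toReal

/-- The cost, for user `i`, of their route in direction `b`, given arc flows `f`:
the sum over the arcs of that route of the user-specific arc costs. -/
noncomputable def routeCost {I : Type} (n : ℕ) [NeZero n]
    (c : I → ZMod n × Bool → ℝ → ℝ) (f : ZMod n × Bool → ℝ)
    (od : I → ZMod n × ZMod n) (i : I) (b : Bool) : ℝ :=
  ∑ a ∈ Finset.univ.filter (fun a : ZMod n × Bool => inRoute n (od i).1 (od i).2 b a),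
    c i a (f a)

/-- `σ` is a Nash equilibrium: every user's chosen route is a minimal-cost route
given the induced flows. -/
def IsEquilibrium {I : Type} [MeasurableSpace I] (μ : Measure I) (n : ℕ) [NeZero n]
    (od : I → ZMod n × ZMod n) (c : I → ZMod n × Bool → ℝ → ℝ) (σ : I → Bool) : Prop :=
  ∀ (i : I) (b : Bool),
    routeCost n c (flow μ n od σ) od i (σ i) ≤ routeCost n c (flow μ n od σ) od i b

/-- The pair `(G, H)` (cycle on `ZMod n`, demand digraph with arc set `L`) has the
uniqueness property: for every nonatomic population partitioned according to its
OD-pairs and every assignment of strictly increasing continuous nonnegative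
user-specific cost functions, all Nash equilibria induce the same arc flows. -/
def UniquenessProperty (n : ℕ) [NeZero n] (L : Finset (ZMod n × ZMod n)) : Prop :=
  ∀ (I : Type) (m : MeasurableSpace I) (μ : @Measure I m),
    @IsFiniteMeasure I m μ →
    ∀ od : I → ZMod n × ZMod n, (∀ i, od i ∈ L) →
    ∀ c : I → ZMod n × Bool → ℝ → ℝ,
      (∀ i a, StrictMono (c i a)) → (∀ i a, Continuous (c i a)) →
      (∀ i a x, 0 ≤ c i a x) →
    ∀ σ σ' : I → Bool,
      (∀ a, @MeasurableSet I m {i | inRoute n (od i).1 (od i).2 (σ i) a}) →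
      (∀ a, @MeasurableSet I m {i | inRoute n (od i).1 (od i).2 (σ' i) a}) →
      @IsEquilibrium I m μ n _ od c σ → @IsEquilibrium I m μ n _ od c σ' →
      ∀ a : ZMod n × Bool, @flow I m μ n od σ a = @flow I m μ n od σ' a

/-! Between two equilibria `σ, σ'`, let `Δ_r` be the change of flow on the positive route of the
OD-pair `r`; the negative route of `r` changes by `-Δ_r`. If `Δ_p > 0` and `Δ_p + Δ_q ≥ 0`, then
every arc of the positive route of `p` is at least as loaded under `σ'` as under `σ` and every arc
of its negative route at most as loaded, strictly on an arc that the route of `q` in the same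
direction avoids (distinct OD-pairs have distinct routes). A user of `p` who moved to the positive
route would then have strictly regretted the move, since costs are strictly increasing. Applying
this to `p` and `q` with the roles of `σ` and `σ'` exchanged forces `Δ_p = Δ_q = 0`. -/

section Routes

variable {n : ℕ} {o d v : ZMod n}

theorem posRoute_self (h : o ≠ d) : posRoute n o d o := by
  simpa [posRoute, ZMod.val_pos, sub_eq_zero] using h.symm

theorem not_posRoute_dest : ¬ posRoute n o d d := lt_irrefl _

theorem negRoute_iff_not_posRoute [NeZero n] (h : o ≠ d) :
    negRoute n o d v ↔ ¬ posRoute n o d v := by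
  have hk : d - o ≠ 0 := sub_ne_zero.mpr h.symm
  have hod : (o - d).val = n - (d - o).val := by
    rw [← neg_sub, ZMod.neg_val, if_neg hk]
  have hvd : v - d = (v - o) - (d - o) := by ring
  have hx := ZMod.val_lt (v - o)
  unfold negRoute posRoute
  rw [hod, hvd]
  rcases le_or_gt (d - o).val (v - o).val with hle | hlt
  · rw [ZMod.val_sub hle]
    omega
  · have hne : (d - o) - (v - o) ≠ 0 := by
      rw [Ne, ← ZMod.val_eq_zero, ZMod.val_sub hlt.le]
      omega
    rw [← neg_sub, ZMod.neg_val, if_neg hne, ZMod.val_sub hlt.le]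
    omega

theorem posRoute_sub_one [NeZero n] (hv : posRoute n o d v) (hvo : v ≠ o) :
    posRoute n o d (v - 1) := by
  have h1 : (1 : ZMod n).val ≤ (v - o).val := by
    rw [ZMod.val_one_eq_one_mod]
    exact (Nat.mod_le 1 n).trans (ZMod.val_pos.mpr (sub_ne_zero.mpr hvo))
  unfold posRoute at hv ⊢
  rw [sub_right_comm, ZMod.val_sub h1]
  omega

theorem not_posRoute_sub_one_self [NeZero n] : ¬ posRoute n o d (o - 1) := by
  unfold posRoute
  rw [sub_sub_cancel_left, not_lt]
  rcases eq_or_ne (1 : ZMod n) 0 with h1 | h1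
  · have : Subsingleton (ZMod n) := subsingleton_of_zero_eq_one h1.symm
    simp [Subsingleton.elim (d - o) 0]
  · have : NeZero (1 : ZMod n) := ⟨h1⟩
    rw [ZMod.val_neg_of_ne_zero, ZMod.val_one_eq_one_mod]
    have := ZMod.val_lt (d - o)
    have := Nat.mod_le 1 n
    omega

theorem eq_of_posRoute_iff [NeZero n] {o' d' : ZMod n} (h' : o' ≠ d')
    (hiff : ∀ v, posRoute n o d v ↔ posRoute n o' d' v) : o = o' ∧ d = d' := by
  have ho : o = o' := by
    by_contra hne
    exact not_posRoute_sub_one_self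
      ((hiff _).mp (posRoute_sub_one ((hiff o').mpr (posRoute_self h')) (Ne.symm hne)))
  subst ho
  refine ⟨rfl, sub_left_injective (b := o) (ZMod.val_injective n (le_antisymm ?_ ?_))⟩
  · exact not_lt.mp fun hlt => not_posRoute_dest ((hiff d').mp hlt)
  · exact not_lt.mp fun hlt => not_posRoute_dest ((hiff d).mpr hlt)

theorem exists_not_posRoute_iff [NeZero n] {p q : ZMod n × ZMod n} (hq : q.1 ≠ q.2)
    (hpq : p ≠ q) : ∃ v, ¬ (posRoute n p.1 p.2 v ↔ posRoute n q.1 q.2 v) := by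
  by_contra! hiff
  obtain ⟨h1, h2⟩ := eq_of_posRoute_iff hq hiff
  exact hpq (Prod.ext h1 h2)

theorem exists_inRoute (h : o ≠ d) (b : Bool) : ∃ v, inRoute n o d b (v, b) := by
  cases b
  · exact ⟨d, rfl, by simpa [negRoute, ZMod.val_pos, sub_eq_zero] using h⟩
  · exact ⟨o, rfl, by simpa using posRoute_self h⟩

theorem exists_not_inRoute_iff [NeZero n] {p q : ZMod n × ZMod n} (hp : p.1 ≠ p.2)
    (hq : q.1 ≠ q.2) (hpq : p ≠ q) (b : Bool) :
    ∃ v, ¬ (inRoute n p.1 p.2 b (v, b) ↔ inRoute n q.1 q.2 b (v, b)) := by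
  obtain ⟨v, hv⟩ := exists_not_posRoute_iff hq hpq
  refine ⟨v, ?_⟩
  cases b <;>
    simpa [inRoute, negRoute_iff_not_posRoute hp, negRoute_iff_not_posRoute hq, not_iff_not]

theorem exists_inRoute_not_inRoute [NeZero n] {p q : ZMod n × ZMod n} (hp : p.1 ≠ p.2)
    (hq : q.1 ≠ q.2) (hpq : p ≠ q) :
    ∃ a : ZMod n × Bool, inRoute n p.1 p.2 a.2 a ∧ ¬ inRoute n q.1 q.2 a.2 a := by
  obtain ⟨v, hv⟩ := exists_not_posRoute_iff hq hpq
  by_cases hpv : posRoute n p.1 p.2 v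
  · exact ⟨(v, true), by simp_all [inRoute]⟩
  · refine ⟨(v, false), ?_⟩
    simp_all [inRoute, negRoute_iff_not_posRoute hp, negRoute_iff_not_posRoute hq]

end Routes

theorem measurableSet_of_measurableSet_or {α I : Type*} [MeasurableSpace I] {P Q : α → Prop}
    {A B : Set I} (hAB : Disjoint A B) (hP : ∃ v, P v) (hQ : ∃ v, Q v)
    (hPQ : ∃ v, ¬ (P v ↔ Q v)) (hF : ∀ v, MeasurableSet {i | i ∈ A ∧ P v ∨ i ∈ B ∧ Q v}) :
    MeasurableSet A ∧ MeasurableSet B := by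
  obtain ⟨v, hv⟩ := hPQ
  wlog hPv : P v generalizing P Q A B
  · exact (this hAB.symm hQ hP (fun w => by simpa only [or_comm] using hF w)
      (by tauto) (by tauto)).symm
  have hA : MeasurableSet A := by simpa [hPv, show ¬ Q v by tauto] using hF v
  obtain ⟨w, hQw⟩ := hQ
  have hB : {i | i ∈ A ∧ P w ∨ i ∈ B ∧ Q w} \ A = B := by
    ext i
    by_cases hi : i ∈ A
    · simp [hi, Set.disjoint_left.mp hAB hi]
    · simp [hi, hQw]
  exact ⟨hA, hB ▸ (hF w).diff hA⟩

noncomputable def routeFlow {I : Type} [MeasurableSpace I] (μ : Measure I) {n : ℕ}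
    (od : I → ZMod n × ZMod n) (τ : I → Bool) (r : ZMod n × ZMod n) (b : Bool) : ℝ :=
  (μ {i | od i = r ∧ τ i = b}).toReal

section Population

variable {I : Type} [MeasurableSpace I] {μ : Measure I} {n : ℕ} {od : I → ZMod n × ZMod n}

theorem flow_eq_sum_routeFlow [IsFiniteMeasure μ] {L : Finset (ZMod n × ZMod n)}
    (hod : ∀ i, od i ∈ L) {τ : I → Bool} (hm : ∀ r b, MeasurableSet {i | od i = r ∧ τ i = b})
    (a : ZMod n × Bool) :
    flow μ n od τ a = ∑ r ∈ L with inRoute n r.1 r.2 a.2 a, routeFlow μ od τ r a.2 := by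
  have hU : {i | inRoute n (od i).1 (od i).2 (τ i) a} =
      ⋃ r ∈ L.filter (fun r => inRoute n r.1 r.2 a.2 a), {i | od i = r ∧ τ i = a.2} := by
    ext i
    simp only [Set.mem_ofPred_eq, Set.mem_iUnion, Finset.mem_filter, exists_prop]
    constructor
    · rintro h
      exact ⟨od i, ⟨hod i, h.1 ▸ h⟩, rfl, h.1.symm⟩
    · rintro ⟨r, ⟨-, hr⟩, rfl, hb⟩
      exact hb ▸ hr
  have hdisj : (↑(L.filter fun r => inRoute n r.1 r.2 a.2 a) : Set _).PairwiseDisjoint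
      fun r => {i | od i = r ∧ τ i = a.2} :=
    fun r _ s _ hrs => Set.disjoint_left.mpr fun i hr hs => hrs (hr.1.symm.trans hs.1)
  rw [flow, hU, measure_biUnion_finset hdisj fun r _ => hm r a.2,
    ENNReal.toReal_sum fun r _ => measure_ne_top μ _]
  rfl

theorem routeFlow_true_add_routeFlow_false [IsFiniteMeasure μ] {τ : I → Bool}
    {r : ZMod n × ZMod n} (hm : MeasurableSet {i | od i = r ∧ τ i = false}) :
    routeFlow μ od τ r true + routeFlow μ od τ r false = (μ {i | od i = r}).toReal := by
  have hdisj : Disjoint {i | od i = r ∧ τ i = true} {i | od i = r ∧ τ i = false} :=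
    Set.disjoint_left.mpr fun i h h' => by simp_all
  have hU : {i | od i = r ∧ τ i = true} ∪ {i | od i = r ∧ τ i = false} = {i | od i = r} := by
    ext i
    cases h : τ i <;> simp [h]
  rw [routeFlow, routeFlow, ← ENNReal.toReal_add (measure_ne_top μ _) (measure_ne_top μ _),
    ← measure_union hdisj hm, hU]

theorem exists_deviation_of_routeFlow_lt [IsFiniteMeasure μ] {τ τ' : I → Bool}
    {r : ZMod n × ZMod n} {b : Bool} (hlt : routeFlow μ od τ r b < routeFlow μ od τ' r b) :
    ∃ i, od i = r ∧ τ i ≠ b ∧ τ' i = b := by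
  by_contra! h
  refine hlt.not_ge (ENNReal.toReal_mono (measure_ne_top μ _) (measure_mono ?_))
  rintro i ⟨hi, hτ'⟩
  exact ⟨hi, not_not.mp fun hτ => h i hi hτ hτ'⟩

end Population

theorem routeCost_sub_lt_routeCost_sub {I : Type} {n : ℕ} [NeZero n]
    {c : I → ZMod n × Bool → ℝ → ℝ} {od : I → ZMod n × ZMod n} {i : I}
    (hc : ∀ a, StrictMono (c i a)) {f f' : ZMod n × Bool → ℝ}
    (htrue : ∀ a, inRoute n (od i).1 (od i).2 true a → f a ≤ f' a)
    (hfalse : ∀ a, inRoute n (od i).1 (od i).2 false a → f' a ≤ f a)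
    (hne : ∃ a, inRoute n (od i).1 (od i).2 a.2 a ∧ f a ≠ f' a) :
    routeCost n c f od i true - routeCost n c f od i false <
      routeCost n c f' od i true - routeCost n c f' od i false := by
  have hle_true : routeCost n c f od i true ≤ routeCost n c f' od i true :=
    Finset.sum_le_sum fun a ha => (hc a).monotone (htrue a (Finset.mem_filter.mp ha).2)
  have hle_false : routeCost n c f' od i false ≤ routeCost n c f od i false :=
    Finset.sum_le_sum fun a ha => (hc a).monotone (hfalse a (Finset.mem_filter.mp ha).2)
  obtain ⟨⟨v, b⟩, ha, hne⟩ := hne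
  have ha' : (v, b) ∈ Finset.univ.filter fun a => inRoute n (od i).1 (od i).2 b a :=
    Finset.mem_filter.mpr ⟨Finset.mem_univ _, ha⟩
  cases b
  · have : routeCost n c f' od i false < routeCost n c f od i false :=
      Finset.sum_lt_sum (fun a ha => (hc a).monotone (hfalse a (Finset.mem_filter.mp ha).2))
        ⟨_, ha', (hc _) ((hfalse _ ha).lt_of_ne hne.symm)⟩
    linarith
  · have : routeCost n c f od i true < routeCost n c f' od i true :=
      Finset.sum_lt_sum (fun a ha => (hc a).monotone (htrue a (Finset.mem_filter.mp ha).2))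
        ⟨_, ha', (hc _) ((htrue _ ha).lt_of_ne hne)⟩
    linarith

section TwoPairs

variable {I : Type} [MeasurableSpace I] {μ : Measure I} {n : ℕ} {p q : ZMod n × ZMod n}
  {od : I → ZMod n × ZMod n}

-- Only the arc sets are assumed measurable; the classes `{od = r, τ = b}` are recovered from them
-- because the routes of two distinct OD-pairs in the same direction differ.
theorem measurableSet_od_eq_and [NeZero n] (hp : p.1 ≠ p.2) (hq : q.1 ≠ q.2) (hpq : p ≠ q)
    (hod : ∀ i, od i = p ∨ od i = q) {τ : I → Bool}
    (hm : ∀ a, MeasurableSet {i | inRoute n (od i).1 (od i).2 (τ i) a}) (r : ZMod n × ZMod n)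
    (b : Bool) : MeasurableSet {i | od i = r ∧ τ i = b} := by
  have hclasses := measurableSet_of_measurableSet_or
    (A := {i | od i = p ∧ τ i = b}) (B := {i | od i = q ∧ τ i = b})
    (Set.disjoint_left.mpr fun i hp hq => hpq (hp.1.symm.trans hq.1))
    (exists_inRoute hp b) (exists_inRoute hq b) (exists_not_inRoute_iff hp hq hpq b)
    fun v => by
      convert hm (v, b) using 1
      ext i
      rcases hod i with h | h <;> simp [inRoute, h, hpq, hpq.symm] <;>
        constructor <;> rintro ⟨h1, h2⟩ <;> subst h1 <;> exact ⟨rfl, h2⟩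
  by_cases hrp : r = p
  · exact hrp ▸ hclasses.1
  by_cases hrq : r = q
  · exact hrq ▸ hclasses.2
  convert MeasurableSet.empty
  ext i
  rcases hod i with h | h <;> simp [h, Ne.symm hrp, Ne.symm hrq]

theorem flow_eq_routeFlow_add_routeFlow [IsFiniteMeasure μ] (hpq : p ≠ q)
    (hod : ∀ i, od i = p ∨ od i = q) {τ : I → Bool}
    (hm : ∀ r b, MeasurableSet {i | od i = r ∧ τ i = b}) (a : ZMod n × Bool) :
    flow μ n od τ a = (if inRoute n p.1 p.2 a.2 a then routeFlow μ od τ p a.2 else 0) +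
      (if inRoute n q.1 q.2 a.2 a then routeFlow μ od τ q a.2 else 0) := by
  have hodL : ∀ i, od i ∈ ({p, q} : Finset _) := fun i => by simpa using hod i
  rw [flow_eq_sum_routeFlow hodL hm, Finset.sum_filter, Finset.sum_pair hpq]

theorem routeFlow_add_routeFlow_lt [NeZero n] [IsFiniteMeasure μ] (hp : p.1 ≠ p.2)
    (hq : q.1 ≠ q.2) (hpq : p ≠ q) (hod : ∀ i, od i = p ∨ od i = q) {c : I → ZMod n × Bool → ℝ → ℝ}
    (hc : ∀ i a, StrictMono (c i a)) {σ σ' : I → Bool}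
    (hmσ : ∀ r b, MeasurableSet {i | od i = r ∧ σ i = b})
    (hmσ' : ∀ r b, MeasurableSet {i | od i = r ∧ σ' i = b})
    (hσ : IsEquilibrium μ n od c σ) (hσ' : IsEquilibrium μ n od c σ')
    (hlt : routeFlow μ od σ p true < routeFlow μ od σ' p true) :
    routeFlow μ od σ' p true + routeFlow μ od σ' q true <
      routeFlow μ od σ p true + routeFlow μ od σ q true := by
  by_contra! hsum
  obtain ⟨i, hi, hσi, hσ'i⟩ := exists_deviation_of_routeFlow_lt hlt
  have hcons : ∀ r, routeFlow μ od σ r false - routeFlow μ od σ' r false =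
      routeFlow μ od σ' r true - routeFlow μ od σ r true := fun r => by
    linarith [routeFlow_true_add_routeFlow_false (μ := μ) (hmσ r false),
      routeFlow_true_add_routeFlow_false (μ := μ) (hmσ' r false)]
  have hflow := flow_eq_routeFlow_add_routeFlow (μ := μ) hpq hod hmσ
  have hflow' := flow_eq_routeFlow_add_routeFlow (μ := μ) hpq hod hmσ'
  have htrue : ∀ a, inRoute n (od i).1 (od i).2 true a → flow μ n od σ a ≤ flow μ n od σ' a := by
    rintro a ha
    rw [hi] at ha
    rw [hflow, hflow', ha.1, if_pos ha]
    split_ifs <;> linarith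
  have hfalse : ∀ a, inRoute n (od i).1 (od i).2 false a →
      flow μ n od σ' a ≤ flow μ n od σ a := by
    rintro a ha
    rw [hi] at ha
    rw [hflow, hflow', ha.1, if_pos ha]
    split_ifs <;> linarith [hcons p, hcons q]
  have hne : ∃ a, inRoute n (od i).1 (od i).2 a.2 a ∧ flow μ n od σ a ≠ flow μ n od σ' a := by
    obtain ⟨⟨v, b⟩, hpa, hqa⟩ := exists_inRoute_not_inRoute hp hq hpq
    refine ⟨(v, b), hi ▸ hpa, ?_⟩
    rw [hflow, hflow', if_pos hpa, if_neg hqa, if_pos hpa, if_neg hqa]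
    cases b
    · exact ne_of_gt (by linarith [hcons p])
    · simpa using hlt.ne
  have hgain := routeCost_sub_lt_routeCost_sub (hc i) htrue hfalse hne
  have hstay := hσ i true
  have hswitch := hσ' i false
  rw [Bool.eq_false_iff.mpr hσi] at hstay
  rw [hσ'i] at hswitch
  linarith

theorem flow_eq_flow_of_isEquilibrium [NeZero n] [IsFiniteMeasure μ] (hp : p.1 ≠ p.2)
    (hq : q.1 ≠ q.2) (hpq : p ≠ q) (hod : ∀ i, od i = p ∨ od i = q)
    {c : I → ZMod n × Bool → ℝ → ℝ} (hc : ∀ i a, StrictMono (c i a)) {σ σ' : I → Bool}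
    (hm : ∀ a, MeasurableSet {i | inRoute n (od i).1 (od i).2 (σ i) a})
    (hm' : ∀ a, MeasurableSet {i | inRoute n (od i).1 (od i).2 (σ' i) a})
    (hσ : IsEquilibrium μ n od c σ) (hσ' : IsEquilibrium μ n od c σ') (a : ZMod n × Bool) :
    flow μ n od σ a = flow μ n od σ' a := by
  have hmσ := measurableSet_od_eq_and hp hq hpq hod hm
  have hmσ' := measurableSet_od_eq_and hp hq hpq hod hm'
  have hod' : ∀ i, od i = q ∨ od i = p := fun i => (hod i).symm
  have hp₁ := routeFlow_add_routeFlow_lt hp hq hpq hod hc hmσ hmσ' hσ hσ'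
  have hq₁ := routeFlow_add_routeFlow_lt hq hp hpq.symm hod' hc hmσ hmσ' hσ hσ'
  have hp₂ := routeFlow_add_routeFlow_lt hp hq hpq hod hc hmσ' hmσ hσ' hσ
  have hq₂ := routeFlow_add_routeFlow_lt hq hp hpq.symm hod' hc hmσ' hmσ hσ' hσ
  have hpos_p : routeFlow μ od σ p true = routeFlow μ od σ' p true := by
    rcases lt_trichotomy (routeFlow μ od σ p true) (routeFlow μ od σ' p true) with h | h | h
    · linarith [hp₁ h, hq₂ (by linarith [hp₁ h])]
    · exact h
    · linarith [hp₂ h, hq₁ (by linarith [hp₂ h])]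
  have hpos_q : routeFlow μ od σ q true = routeFlow μ od σ' q true := by
    rcases lt_trichotomy (routeFlow μ od σ q true) (routeFlow μ od σ' q true) with h | h | h
    · linarith [hq₁ h, hp₂ (by linarith [hq₁ h])]
    · exact h
    · linarith [hq₂ h, hp₁ (by linarith [hq₂ h])]
  have hroute : ∀ r, routeFlow μ od σ r true = routeFlow μ od σ' r true →
      ∀ b, routeFlow μ od σ r b = routeFlow μ od σ' r b := fun r hr b => by
    cases b
    · linarith [routeFlow_true_add_routeFlow_false (μ := μ) (hmσ r false),
        routeFlow_true_add_routeFlow_false (μ := μ) (hmσ' r false)]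
    · exact hr
  rw [flow_eq_routeFlow_add_routeFlow hpq hod hmσ, flow_eq_routeFlow_add_routeFlow hpq hod hmσ',
    hroute p hpos_p, hroute q hpos_q]

end TwoPairs

theorem exists_pair_superset {n : ℕ} {L : Finset (ZMod n × ZMod n)}
    (hL : ∀ ℓ ∈ L, ℓ.1 ≠ ℓ.2) (hcard : L.card ≤ 2) {p : ZMod n × ZMod n} (hp : p ∈ L) :
    ∃ q : ZMod n × ZMod n, q.1 ≠ q.2 ∧ p ≠ q ∧ L ⊆ {p, q} := by
  by_cases hLp : L ⊆ {p}
  · -- a single OD-pair: pair it with its reverse, which no user travels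
    refine ⟨p.swap, (hL p hp).symm, fun h => hL p hp (congrArg Prod.fst h), ?_⟩
    exact hLp.trans (Finset.singleton_subset_iff.mpr (Finset.mem_insert_self _ _))
  · obtain ⟨q, hqL, hqp⟩ := Finset.not_subset.mp hLp
    have hpq : p ≠ q := fun h => hqp (h ▸ Finset.mem_singleton_self p)
    refine ⟨q, hL q hqL, hpq, (Finset.eq_of_subset_of_card_le ?_ ?_).ge⟩
    · exact Finset.insert_subset hp (Finset.singleton_subset_iff.mpr hqL)
    · rwa [Finset.card_pair hpq]

theorem uniquenessProperty_of_atMostTwoPairs_general (n : ℕ) [NeZero n]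
    (L : Finset (ZMod n × ZMod n)) (hL : ∀ ℓ ∈ L, ℓ.1 ≠ ℓ.2)
    (hcard : L.card ≤ 2) :
    UniquenessProperty n L := by
  intro I m μ hμ od hod c hc _ _ σ σ' hm hm' hσ hσ' a
  rcases L.eq_empty_or_nonempty with rfl | ⟨p, hpL⟩
  · obtain rfl : σ = σ' := funext fun i => absurd (hod i) (Finset.notMem_empty _)
    rfl
  obtain ⟨q, hq, hpq, hLpq⟩ := exists_pair_superset hL hcard hpL
  exact flow_eq_flow_of_isEquilibrium (hL p hpL) hq hpq (fun i => by simpa using hLpq (hod i))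
    hc hm hm' hσ hσ' a

/-- If the supply graph is a cycle and there are at most two OD-pairs,
then `(G, H)` has the uniqueness property. -/
theorem uniquenessProperty_of_atMostTwoPairs (n : ℕ) [NeZero n] (hn : 3 ≤ n)
    (L : Finset (ZMod n × ZMod n)) (hL : ∀ ℓ ∈ L, ℓ.1 ≠ ℓ.2)
    (hcard : L.card ≤ 2) :
    UniquenessProperty n L :=
  uniquenessProperty_of_atMostTwoPairs_general n L hL hcard
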